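/- For any tree T of order n(T) ≥ 3 with maximum degree Δ(T) and s(T) support vertices, γ^t_StR(T) ≥ ⌈(n(T)+s(T))/Δ(T)⌉ + 1. -/

import Mathlib

open Finset

variable {V : Type*} [Fintype V]

/-- The degree of a vertex. -/
noncomputable def degN (G : SimpleGraph V) (v : V) : ℕ := {u | G.Adj v u}.ncard

/-- Maximum degree. -/
noncomputable def maxDeg (G : SimpleGraph V) : ℕ := Finset.univ.sup (degN G)

/-- Minimum degree. -/
noncomputable def minDeg (G : SimpleGraph V) : ℕ := sInf {d | ∃ v, degN G v = d}

/-- No isolated vertex. -/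
def NoIsolated (G : SimpleGraph V) : Prop := ∀ v, ∃ u, G.Adj v u

/-- Total strong Roman dominating function. `(Δ+1)/2 = ⌈Δ/2⌉` and
`(m+1)/2 = ⌈m/2⌉` in natural-number arithmetic. -/
def IsTSRDF (G : SimpleGraph V) (f : V → ℕ) : Prop :=
  (∀ v, f v ≤ (maxDeg G + 1) / 2 + 1) ∧
  (∀ v, f v = 0 → ∃ u, G.Adj v u ∧
      1 + ({w | G.Adj u w ∧ f w = 0}.ncard + 1) / 2 ≤ f u) ∧
  (∀ v, 0 < f v → ∃ u, G.Adj v u ∧ 0 < f u)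

/-- The total strong Roman domination number. -/
noncomputable def tsrd (G : SimpleGraph V) : ℕ :=
  sInf {k | ∃ f : V → ℕ, IsTSRDF G f ∧ ∑ v, f v = k}


/-!
Let `A`, `B`, `Z` be the vertices with label `≥ 1`, `≥ 2` and `0`. A strong dominator of a zero
vertex has label at least `1 + ⌈1/2⌉ = 2`, and every positive vertex has a positive neighbour and
hence at most `Δ - 1` zero neighbours, so `|Z| ≤ (Δ - 1)|B|`, while `w(f) ≥ |A| + |B|`. A support
vertex labelled `0` would leave its leaf with neither a dominator nor a positive neighbour, so
`s ≤ |A|`; and a tree of order `≥ 3` has two leaves, none of them a support vertex, so `s ≤ n - 2`.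
Together with `|A| ≥ 2` this gives `n + s + Δ ≤ Δ w(f)`, i.e. `w(f) ≥ ⌈(n + s)/Δ⌉ + 1`.
-/

open SimpleGraph Fintype

theorem Set.ncard_setOf_eq_card_filter {α : Type*} [Fintype α] (p : α → Prop) [DecidablePred p] :
    {x | p x}.ncard = #{x | p x} := by
  rw [← coe_filter_univ, Set.ncard_coe_finset]

theorem Finset.card_filter_ne_zero_add_card_filter_two_le_le_sum {ι : Type*} (s : Finset ι)
    (f : ι → ℕ) : #{x ∈ s | f x ≠ 0} + #{x ∈ s | 2 ≤ f x} ≤ ∑ x ∈ s, f x := by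
  rw [card_filter, card_filter, ← sum_add_distrib]
  gcongr with x
  split_ifs <;> omega

section Adjacency

variable {α : Type*} {G : SimpleGraph α}

theorem SimpleGraph.Reachable.mem_of_forall_adj_mem {S : Set α}
    (hS : ∀ a b, a ∈ S → G.Adj a b → b ∈ S) {a b : α} (h : G.Reachable a b) (ha : a ∈ S) :
    b ∈ S := by
  obtain ⟨p⟩ := h
  induction p with
  | nil => exact ha
  | cons hadj _ ih => exact ih (hS _ _ ha hadj)

theorem SimpleGraph.Preconnected.noIsolated [Nontrivial α] (hG : G.Preconnected) :
    NoIsolated G := fun v =>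
  G.mem_support.1 (hG.support_eq_univ ▸ Set.mem_univ v)

theorem eq_of_degN_eq_one {l v w : α} (hl : degN G l = 1) (hv : G.Adj l v) (hw : G.Adj l w) :
    w = v := by
  obtain ⟨a, ha⟩ := Set.ncard_eq_one.1 hl
  have hv' : v ∈ ({a} : Set α) := ha ▸ hv
  have hw' : w ∈ ({a} : Set α) := ha ▸ hw
  rw [Set.mem_singleton_iff] at hv' hw'
  rw [hv', hw']

end Adjacency

section Degrees

variable {G : SimpleGraph V}

theorem degN_eq_degree [DecidableRel G.Adj] (v : V) : degN G v = G.degree v := by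
  rw [← card_neighborSet_eq_degree, ← Nat.card_eq_fintype_card]
  rfl

theorem degN_le_maxDeg (v : V) : degN G v ≤ maxDeg G :=
  Finset.le_sup (Finset.mem_univ v)

theorem SimpleGraph.Connected.not_adj_of_degN_eq_one (hG : G.Connected) (hn : 3 ≤ card V)
    {u v : V} (hu : degN G u = 1) (hv : degN G v = 1) : ¬G.Adj u v := by
  intro huv
  have hclosed : ∀ a b, a ∈ ({u, v} : Set V) → G.Adj a b → b ∈ ({u, v} : Set V) := by
    rintro a b (rfl | rfl) hab
    · exact .inr (eq_of_degN_eq_one hu huv hab)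
    · exact .inl (eq_of_degN_eq_one hv huv.symm hab)
  have huniv : (Set.univ : Set V) ⊆ {u, v} := fun x _ =>
    (hG.preconnected u x).mem_of_forall_adj_mem hclosed (.inl rfl)
  have := Set.ncard_le_ncard huniv
  rw [Set.ncard_univ, Nat.card_eq_fintype_card, Set.ncard_pair huv.ne] at this
  omega

theorem SimpleGraph.IsTree.ncard_supports_add_two_le (hT : G.IsTree) (hn : 3 ≤ card V) :
    {v | ∃ u, G.Adj v u ∧ degN G u = 1}.ncard + 2 ≤ card V := by
  classical
  have : Nontrivial V := one_lt_card_iff_nontrivial.1 (by omega)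
  obtain ⟨l₁, l₂, hne, h₁, h₂⟩ := hT.exists_ne_and_degree_eq_one
  rw [← degN_eq_degree] at h₁ h₂
  have hsub : {v | ∃ u, G.Adj v u ∧ degN G u = 1} ⊆ ({l₁, l₂} : Set V)ᶜ := by
    rintro v ⟨u, hvu, hu⟩ (rfl | rfl)
    · exact hT.connected.not_adj_of_degN_eq_one hn h₁ hu hvu
    · exact hT.connected.not_adj_of_degN_eq_one hn h₂ hu hvu
  have := Set.ncard_le_ncard hsub
  have hcompl := Set.ncard_add_ncard_compl ({l₁, l₂} : Set V)
  rw [Set.ncard_pair hne, Nat.card_eq_fintype_card] at hcompl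
  omega

theorem SimpleGraph.IsTree.two_le_maxDeg (hT : G.IsTree) (hn : 3 ≤ card V) : 2 ≤ maxDeg G := by
  classical
  have : Nontrivial V := one_lt_card_iff_nontrivial.1 (by omega)
  obtain ⟨l, -, -, hl, -⟩ := hT.exists_ne_and_degree_eq_one
  obtain ⟨u, hlu, -⟩ := degree_eq_one_iff_existsUnique_adj.1 hl
  rw [← degN_eq_degree] at hl
  have hu0 : degN G u ≠ 0 := ((Set.ncard_pos).2 ⟨l, hlu.symm⟩).ne'
  have hu1 : degN G u ≠ 1 := fun hu => hT.connected.not_adj_of_degN_eq_one hn hl hu hlu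
  have := degN_le_maxDeg (G := G) u
  omega

end Degrees

namespace IsTSRDF

variable {G : SimpleGraph V} {f : V → ℕ}

theorem exists_adj_two_le (hf : IsTSRDF G f) {v : V} (hv : f v = 0) :
    ∃ u, G.Adj u v ∧ 2 ≤ f u := by
  obtain ⟨u, hvu, hu⟩ := hf.2.1 v hv
  have : 0 < {w | G.Adj u w ∧ f w = 0}.ncard := (Set.ncard_pos).2 ⟨v, hvu.symm, hv⟩
  exact ⟨u, hvu.symm, by omega⟩

theorem ncard_zero_adj_add_one_le (hf : IsTSRDF G f) {u : V} (hu : f u ≠ 0) :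
    {w | G.Adj u w ∧ f w = 0}.ncard + 1 ≤ maxDeg G := by
  obtain ⟨p, hup, hp⟩ := hf.2.2 u (Nat.pos_of_ne_zero hu)
  have hssub : {w | G.Adj u w ∧ f w = 0} ⊂ {w | G.Adj u w} :=
    Set.ssubset_iff_of_subset (fun w hw => hw.1) |>.2 ⟨p, hup, fun h => by simp_all⟩
  exact (Set.ncard_lt_ncard hssub).trans_le (degN_le_maxDeg u)

theorem ne_zero_of_adj_degN_eq_one (hf : IsTSRDF G f) {v l : V} (hvl : G.Adj v l)
    (hl : degN G l = 1) : f v ≠ 0 := by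
  intro hv
  have hnbr : ∀ u, G.Adj l u → f u = 0 := fun u hlu => eq_of_degN_eq_one hl hvl.symm hlu ▸ hv
  rcases Nat.eq_zero_or_pos (f l) with hl0 | hlpos
  · obtain ⟨u, hul, hu⟩ := hf.exists_adj_two_le hl0
    have := hnbr u hul.symm
    omega
  · obtain ⟨u, hlu, hu⟩ := hf.2.2 l hlpos
    have := hnbr u hlu
    omega

theorem ncard_supports_le (hf : IsTSRDF G f) :
    {v | ∃ u, G.Adj v u ∧ degN G u = 1}.ncard ≤ #{v | f v ≠ 0} := by
  rw [← Set.ncard_setOf_eq_card_filter]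
  exact Set.ncard_le_ncard fun v ⟨_, hvl, hl⟩ => hf.ne_zero_of_adj_degN_eq_one hvl hl

theorem two_le_card_filter_ne_zero [Nonempty V] (hf : IsTSRDF G f) : 2 ≤ #{v | f v ≠ 0} := by
  classical
  obtain ⟨u, hu⟩ : ∃ u, f u ≠ 0 := by
    obtain ⟨v⟩ := ‹Nonempty V›
    by_cases hv : f v = 0
    · obtain ⟨u, -, hu⟩ := hf.exists_adj_two_le hv
      exact ⟨u, by omega⟩
    · exact ⟨v, hv⟩
  obtain ⟨p, hup, hp⟩ := hf.2.2 u (Nat.pos_of_ne_zero hu)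
  calc 2 = #{u, p} := (card_pair hup.ne).symm
    _ ≤ #{v | f v ≠ 0} := card_le_card fun w hw => by
      rcases mem_insert.1 hw with rfl | hw
      · simpa using hu
      · simp [mem_singleton.1 hw, hp.ne']

theorem card_filter_eq_zero_le (hf : IsTSRDF G f) :
    #{v | f v = 0} ≤ #{u | 2 ≤ f u} * (maxDeg G - 1) := by
  classical
  have hsub : ({v | f v = 0} : Finset V) ⊆
      ({u | 2 ≤ f u} : Finset V).biUnion fun u => {w | G.Adj u w ∧ f w = 0} := by
    intro v hv
    rw [mem_filter_univ] at hv
    obtain ⟨u, huv, hu⟩ := hf.exists_adj_two_le hv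
    exact mem_biUnion.2 ⟨u, (mem_filter_univ _).2 hu, (mem_filter_univ _).2 ⟨huv, hv⟩⟩
  calc #{v | f v = 0}
      _ ≤ ∑ u ∈ {u | 2 ≤ f u}, #{w | G.Adj u w ∧ f w = 0} :=
        (card_le_card hsub).trans card_biUnion_le
      _ ≤ ∑ u ∈ {u | 2 ≤ f u}, (maxDeg G - 1) := sum_le_sum fun u hu => by
        have := hf.ncard_zero_adj_add_one_le (u := u) (by simp at hu; omega)
        rw [Set.ncard_setOf_eq_card_filter] at this
        omega
      _ = #{u | 2 ≤ f u} * (maxDeg G - 1) := by rw [sum_const, smul_eq_mul]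

theorem card_add_ncard_supports_add_maxDeg_le (hT : G.IsTree) (hn : 3 ≤ card V)
    (hf : IsTSRDF G f) :
    card V + {v | ∃ u, G.Adj v u ∧ degN G u = 1}.ncard + maxDeg G ≤ maxDeg G * ∑ v, f v := by
  have : Nonempty V := card_pos_iff.1 (by omega)
  have hZA : #{v | f v = 0} + #{v | f v ≠ 0} = card V := card_filter_add_card_filter_not _
  have hBA : #{v | 2 ≤ f v} ≤ #{v | f v ≠ 0} :=
    card_le_card (monotone_filter_right _ fun v h => by omega)
  have hA := hf.two_le_card_filter_ne_zero
  have hZB := hf.card_filter_eq_zero_le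
  have hsA := hf.ncard_supports_le
  have hsn := hT.ncard_supports_add_two_le hn
  have hΔ := hT.two_le_maxDeg hn
  have hw := card_filter_ne_zero_add_card_filter_two_le_le_sum univ f
  set z := #{v | f v = 0}
  set a := #{v | f v ≠ 0}
  set k := #{v | 2 ≤ f v}
  set s := {v | ∃ u, G.Adj v u ∧ degN G u = 1}.ncard
  set Δ := maxDeg G
  calc card V + s + Δ ≤ Δ * (a + k) := by
        rw [← hZA]
        clear_value z a k s Δ
        obtain ⟨d, rfl⟩ : ∃ d, Δ = d + 2 := ⟨Δ - 2, by omega⟩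
        rw [show d + 2 - 1 = d + 1 by omega] at hZB
        -- `s ≤ n - 2` suffices if some positive label is `1`; otherwise `s ≤ |A|` does.
        rcases hBA.lt_or_eq with hka | rfl
        · nlinarith
        · nlinarith
    _ ≤ Δ * ∑ v, f v := by gcongr

end IsTSRDF

theorem NoIsolated.isTSRDF_const {G : SimpleGraph V} (hG : NoIsolated G) :
    IsTSRDF G fun _ => (maxDeg G + 1) / 2 + 1 :=
  ⟨fun _ => le_rfl, fun _ h => absurd h (Nat.succ_ne_zero _), fun v _ =>
    (hG v).imp fun _ hvu => ⟨hvu, Nat.succ_pos _⟩⟩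

theorem NoIsolated.exists_isTSRDF_sum_eq_tsrd {G : SimpleGraph V} (hG : NoIsolated G) :
    ∃ f, IsTSRDF G f ∧ ∑ v, f v = tsrd G :=
  Nat.sInf_mem (s := {k | ∃ f : V → ℕ, IsTSRDF G f ∧ ∑ v, f v = k})
    ⟨_, _, hG.isTSRDF_const, rfl⟩

theorem stmt18 (G : SimpleGraph V) (ht : G.IsTree) (hn : 3 ≤ Fintype.card V) :
    (Fintype.card V + {v | ∃ u, G.Adj v u ∧ degN G u = 1}.ncard + maxDeg G - 1)
        / maxDeg G + 1 ≤ tsrd G := by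
  have : Nontrivial V := one_lt_card_iff_nontrivial.1 (by omega)
  obtain ⟨f, hf, hw⟩ := ht.connected.preconnected.noIsolated.exists_isTSRDF_sum_eq_tsrd
  have hbound := hf.card_add_ncard_supports_add_maxDeg_le ht hn
  have hΔ := ht.two_le_maxDeg hn
  rw [← hw, Nat.add_one_le_iff, Nat.div_lt_iff_lt_mul (by omega), mul_comm]
  omega
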